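/- arXiv:2209.06536 — 3 statements merged into one kernel-verified Lean document; each statement's English description precedes it below -/
import Mathlib

section
/- For every real μ > 0 and every k ∈ (0,1), one has 1 − k^μ ≥ μ(1−k)/(1 + μ(1−k)). -/
theorem stmt_2 (μ : ℝ) (hμ : 0 < μ) (k : ℝ) (hk : k ∈ Set.Ioo (0:ℝ) 1) :
    1 - k ^ μ ≥ μ * (1 - k) / (1 + μ * (1 - k)) := by
  obtain ⟨hk0, hk1⟩ := hk
  have hμ1 : (0:ℝ) < μ + 1 := by linarith
  have hamgm := Real.geom_mean_le_arith_mean2_weighted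
    (w₁ := 1/(μ+1)) (w₂ := μ/(μ+1)) (p₁ := 1) (p₂ := k ^ (μ+1))
    (by positivity) (by positivity) (by norm_num)
    (Real.rpow_nonneg hk0.le _) (by field_simp; ring)
  have h1 : (1:ℝ) ^ (1/(μ+1)) = 1 := Real.one_rpow _
  have h2 : (k ^ (μ+1)) ^ (μ/(μ+1)) = k ^ μ := by
    rw [← Real.rpow_mul hk0.le]
    congr 1
    field_simp
  have h3 : k ^ (μ+1) = k ^ μ * k := by
    rw [Real.rpow_add hk0, Real.rpow_one]
  rw [h1, h2, one_mul, h3] at hamgm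
  have hd : (0:ℝ) < 1 + μ * (1 - k) := by nlinarith
  rw [ge_iff_le, div_le_iff₀ hd]
  have := mul_le_mul_of_nonneg_right hamgm hμ1.le
  have hkμ : 0 ≤ k ^ μ := Real.rpow_nonneg hk0.le _
  field_simp at this
  nlinarith [this]
end

section
/- Let 0 ≤ p' < p'' ≤ p* ≤ 1 (or 1 ≥ p' > p'' ≥ p* ≥ 0) with p' ≠ p*, and let μ > 0. Define Y^split = μ(p''−p') / (p*−p' + μ(p''−p')) and Y^slide = 1 − ((p*−p'')/(p*−p'))^μ. Then Y^slide ≥ Y^split. -/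
/-! With `t = (p'' - p') / (p* - p') ∈ (0, 1]` the two quantities become
`Y^slide = 1 - (1 - t)^μ` and `Y^split = μt / (1 + μt)`, and the inequality is the chain
`(1 - t)^μ ≤ (e^{-t})^μ = e^{-μt} ≤ 1 / (1 + μt)`, both steps being `1 + x ≤ e^x`. -/

open Real

lemma one_sub_rpow_le_exp_neg_mul {t μ : ℝ} (ht : t ≤ 1) (hμ : 0 ≤ μ) :
    (1 - t) ^ μ ≤ exp (-(μ * t)) :=
  calc (1 - t) ^ μ ≤ exp (-t) ^ μ := rpow_le_rpow (by linarith) (one_sub_le_exp_neg t) hμ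
    _ = exp (-(μ * t)) := by rw [← exp_mul]; ring_nf

lemma exp_neg_le_inv_one_add {x : ℝ} (hx : 0 < 1 + x) : exp (-x) ≤ (1 + x)⁻¹ := by
  rw [exp_neg]
  exact inv_anti₀ hx (by linarith [add_one_le_exp x])

lemma mul_div_one_add_mul_le_one_sub_one_sub_rpow {t μ : ℝ} (ht₀ : 0 ≤ t) (ht₁ : t ≤ 1)
    (hμ : 0 ≤ μ) : μ * t / (1 + μ * t) ≤ 1 - (1 - t) ^ μ := by
  have hpos : 0 < 1 + μ * t := by positivity
  have hsplit : μ * t / (1 + μ * t) = 1 - (1 + μ * t)⁻¹ := by field_simp; ring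
  rw [hsplit]
  linarith [one_sub_rpow_le_exp_neg_mul ht₁ hμ, exp_neg_le_inv_one_add hpos]

lemma mul_div_add_mul_le_one_sub_sub_div_rpow {a d μ : ℝ} (ha : a ≠ 0) (hd₀ : 0 ≤ d / a)
    (hd₁ : d / a ≤ 1) (hμ : 0 ≤ μ) : μ * d / (a + μ * d) ≤ 1 - ((a - d) / a) ^ μ := by
  have hsplit : μ * d / (a + μ * d) = μ * (d / a) / (1 + μ * (d / a)) := by
    rw [← div_div_div_cancel_right₀ ha]; field_simp
  rw [hsplit, ← one_sub_div ha]
  exact mul_div_one_add_mul_le_one_sub_one_sub_rpow hd₀ hd₁ hμ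

theorem stmt_3_general (μ p' p'' pstar : ℝ) (hμ : 0 < μ)
    (h : (0 ≤ p' ∧ p' < p'' ∧ p'' ≤ pstar ∧ pstar ≤ 1) ∨
         (1 ≥ p' ∧ p' > p'' ∧ p'' ≥ pstar ∧ pstar ≥ 0)) :
    1 - ((pstar - p'') / (pstar - p')) ^ μ ≥
      μ * (p'' - p') / (pstar - p' + μ * (p'' - p')) := by
  have hsub : pstar - p'' = (pstar - p') - (p'' - p') := by ring
  rw [hsub]
  rcases h with ⟨-, h₁, h₂, -⟩ | ⟨-, h₁, h₂, -⟩
  · exact mul_div_add_mul_le_one_sub_sub_div_rpow (by linarith)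
      (div_nonneg (by linarith) (by linarith)) (div_le_one_of_le₀ (by linarith) (by linarith))
      hμ.le
  · exact mul_div_add_mul_le_one_sub_sub_div_rpow (by linarith)
      (div_nonneg_of_nonpos (by linarith) (by linarith))
      (div_le_one_of_ge (by linarith) (by linarith)) hμ.le

theorem stmt_3 (μ p' p'' pstar : ℝ) (hμ : 0 < μ)
    (h : (0 ≤ p' ∧ p' < p'' ∧ p'' ≤ pstar ∧ pstar ≤ 1) ∨
         (1 ≥ p' ∧ p' > p'' ∧ p'' ≥ pstar ∧ pstar ≥ 0))
    (hne : p' ≠ pstar) :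
    1 - ((pstar - p'') / (pstar - p')) ^ μ ≥
      μ * (p'' - p') / (pstar - p' + μ * (p'' - p')) :=
  stmt_3_general μ p' p'' pstar hμ h
end

section
/- Let μ > 0 and p' ≤ p* ≤ p'' with p' < p''. Suppose a function w: [p',p''] → ℝ is affine on [p',p''] and satisfies w(p') = Y'·u' + (1−Y')·w(p'') and w(p'') = Y''·u'' + (1−Y'')·w(p'), where Y' = μ(p''−p')/(p*−p' + μ(p''−p')) and Y'' = μ(p''−p')/(p''−p* + μ(p''−p')), and u', u'' ∈ ℝ. Then for every p ∈ [p',p''], w(p) = u'·(p''(μ+1)−p*−μp)/((p''−p')(μ+1)) + u''·(p*−p'(μ+1)+μp)/((p''−p')(μ+1)). -/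
/-!
Clearing the denominator in each recursion turns it into a linear balance equation for the affine
`w p = a * p + b`: `μ (w p' - u') = a (p* - p')` and `μ (u'' - w p'') = a (p'' - p*)`. Adding them
gives the slope `a = μ (u'' - u') / ((μ + 1) (p'' - p'))`, and either one then gives `b`.
-/

theorem split_recursion_iff {μ d x u wL wR : ℝ} (hD : x + μ * d ≠ 0) :
    wL = μ * d / (x + μ * d) * u + (1 - μ * d / (x + μ * d)) * wR ↔
      x * (wL - wR) = μ * d * (u - wL) := by
  rw [← sub_eq_zero, ← sub_eq_zero (a := x * _)]
  have key : wL - (μ * d / (x + μ * d) * u + (1 - μ * d / (x + μ * d)) * wR) =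
      (x * (wL - wR) - μ * d * (u - wL)) / (x + μ * d) := by
    field_simp
    ring
  rw [key, div_eq_zero_iff, or_iff_left hD]

theorem affine_eq_of_balance {μ pstar p' p'' u' u'' a b : ℝ} (hμ : μ ≠ 0) (hμ1 : μ + 1 ≠ 0)
    (hd : p'' - p' ≠ 0)
    (e' : μ * (a * p' + b - u') = a * (pstar - p'))
    (e'' : μ * (u'' - (a * p'' + b)) = a * (p'' - pstar)) (p : ℝ) :
    a * p + b = u' * (p'' * (μ + 1) - pstar - μ * p) / ((p'' - p') * (μ + 1))
        + u'' * (pstar - p' * (μ + 1) + μ * p) / ((p'' - p') * (μ + 1)) := by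
  rw [← add_div, eq_div_iff (mul_ne_zero hd hμ1)]
  apply mul_right_cancel₀ hμ
  linear_combination (p'' * (μ + 1) - pstar - μ * p) * e' - (pstar - p' * (μ + 1) + μ * p) * e''

theorem stmt_6 (μ pstar p' p'' u' u'' : ℝ) (hμ : 0 < μ)
    (h1 : p' ≤ pstar) (h2 : pstar ≤ p'') (h3 : p' < p'')
    (w : ℝ → ℝ)
    (haff : ∃ a b : ℝ, ∀ p ∈ Set.Icc p' p'', w p = a * p + b)
    (hY' : w p' = (μ * (p'' - p') / (pstar - p' + μ * (p'' - p'))) * u'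
        + (1 - μ * (p'' - p') / (pstar - p' + μ * (p'' - p'))) * w p'')
    (hY'' : w p'' = (μ * (p'' - p') / (p'' - pstar + μ * (p'' - p'))) * u''
        + (1 - μ * (p'' - p') / (p'' - pstar + μ * (p'' - p'))) * w p') :
    ∀ p ∈ Set.Icc p' p'',
      w p = u' * (p'' * (μ + 1) - pstar - μ * p) / ((p'' - p') * (μ + 1))
          + u'' * (pstar - p' * (μ + 1) + μ * p) / ((p'' - p') * (μ + 1)) := by
  obtain ⟨a, b, hab⟩ := haff
  have hd : 0 < p'' - p' := sub_pos.2 h3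
  have hμd : 0 < μ * (p'' - p') := mul_pos hμ hd
  have hw' : w p' = a * p' + b := hab p' ⟨le_rfl, h3.le⟩
  have hw'' : w p'' = a * p'' + b := hab p'' ⟨h3.le, le_rfl⟩
  rw [split_recursion_iff (by linarith), hw', hw''] at hY' hY''
  have e' : μ * (a * p' + b - u') = a * (pstar - p') :=
    mul_right_cancel₀ hd.ne' (by linear_combination hY')
  have e'' : μ * (u'' - (a * p'' + b)) = a * (p'' - pstar) :=
    mul_right_cancel₀ hd.ne' (by linear_combination -hY'')
  intro p hp
  rw [hab p hp]
  exact affine_eq_of_balance hμ.ne' (by linarith) hd.ne' e' e'' p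
end
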